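/- arXiv:2003.14399 — 3 statements merged into one kernel-verified Lean document; each statement's English description precedes it below -/
import Mathlib

section
/- Let (ξⁿ), (kₙ) be sequences of nonnegative reals and ε, γ, C ≥ 0 constants with γ > 0. Suppose that for all n ≥ 0, (1/2)(ξ_{n+1} - ξ_n) + (kₙ ε)/(2γ²) · ξ_{n+1} ≤ C·kₙ, and suppose kₙ ≤ k for all n. Then for all n, ξ_{n+1} ≤ exp(-ε t_{n+1}/(γ² + ε k))·ξ₀ + 2C·(γ² + εk)/ε · (1 - exp(-ε t_{n+1}/(γ² + εk))), where t_{n+1} = Σ_{i=0}^{n} kᵢ. -/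
/-!
Writing `P = γ²`, `sₙ = kₙ ε` and `D = γ² + ε k`, each implicit step gives
`ξₙ₊₁ ≤ P/(P+sₙ) ξₙ + cₙ`. The hypothesis `kₙ ≤ k` means `P + sₙ ≤ D`, which makes the factor
`P/(P+sₙ) ≤ 1 - sₙ/D ≤ exp(-sₙ/D)` and the source `cₙ ≤ M (1 - exp(-sₙ/D))` with
`M = 2CD/ε`. Any recursion `ξₙ₊₁ ≤ aₙ ξₙ + cₙ` with `aₙ ≤ exp(-bₙ)` and
`cₙ ≤ M (1 - exp(-bₙ))` keeps the nonnegative `ξ` below the solution of the continuous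
problem, `exp(-Bₙ) ξ₀ + M (1 - exp(-Bₙ))` with `Bₙ = ∑_{i<n} bᵢ`.
-/

open Real Finset

theorem le_exp_neg_sum_mul_add_of_succ_le {ξ a b c : ℕ → ℝ} {M : ℝ} (hξ : ∀ n, 0 ≤ ξ n)
    (ha : ∀ n, a n ≤ exp (-b n)) (hc : ∀ n, c n ≤ M * (1 - exp (-b n)))
    (hstep : ∀ n, ξ (n + 1) ≤ a n * ξ n + c n) (n : ℕ) :
    ξ n ≤ exp (-∑ i ∈ range n, b i) * ξ 0 + M * (1 - exp (-∑ i ∈ range n, b i)) := by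
  induction n with
  | zero => simp
  | succ n ih =>
    rw [sum_range_succ, neg_add, exp_add]
    set E := exp (-∑ i ∈ range n, b i)
    set X := exp (-b n)
    calc ξ (n + 1) ≤ a n * ξ n + c n := hstep n
      _ ≤ X * ξ n + M * (1 - X) := add_le_add (mul_le_mul_of_nonneg_right (ha n) (hξ n)) (hc n)
      _ ≤ X * (E * ξ 0 + M * (1 - E)) + M * (1 - X) := by gcongr
      _ = E * X * ξ 0 + M * (1 - E * X) := by ring

theorem le_div_add_mul_add_of_half_sub_add_le {P s x y r : ℝ} (hP : 0 < P) (hs : 0 ≤ s)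
    (h : 1 / 2 * (y - x) + s / (2 * P) * y ≤ r) :
    y ≤ P / (P + s) * x + P / (P + s) * (2 * r) := by
  have hPs : 0 < P + s := by positivity
  rw [← mul_add, div_mul_eq_mul_div, le_div_iff₀ hPs]
  have h' : 2 * P * (1 / 2 * (y - x) + s / (2 * P) * y) = P * (y - x) + s * y := by
    field_simp
  nlinarith [mul_le_mul_of_nonneg_left h (by positivity : (0 : ℝ) ≤ 2 * P)]

theorem div_add_le_exp_neg_div {P s D : ℝ} (hP : 0 < P) (hs : 0 ≤ s) (hD : P + s ≤ D) :
    P / (P + s) ≤ exp (-(s / D)) := by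
  have hPs : 0 < P + s := by positivity
  have hD0 : 0 < D := hPs.trans_le hD
  calc P / (P + s) ≤ 1 - s / D := by
        rw [div_le_iff₀ hPs, sub_mul, div_mul_eq_mul_div, le_sub_iff_add_le, ← le_sub_iff_add_le',
          div_le_iff₀ hD0]
        nlinarith
    _ ≤ exp (-(s / D)) := one_sub_le_exp_neg _

theorem div_add_mul_le_mul_one_sub_exp_neg {P s D : ℝ} (hP : 0 < P) (hs : 0 ≤ s) (hPD : P ≤ D) :
    P / (P + s) * s ≤ D * (1 - exp (-(s / D))) := by
  have hD0 : 0 < D := hP.trans_le hPD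
  have hexp : exp (-(s / D)) ≤ D / (D + s) := by
    rw [exp_neg, ← one_div, div_le_div_iff₀ (exp_pos _) (by positivity)]
    nlinarith [add_one_le_exp (s / D), div_mul_cancel₀ s hD0.ne']
  have hmono : P / (P + s) ≤ D / (D + s) := by
    rw [div_le_div_iff₀ (by positivity) (by positivity)]
    nlinarith
  calc P / (P + s) * s ≤ D / (D + s) * s := by gcongr
    _ = D * (1 - D / (D + s)) := by field_simp; ring
    _ ≤ D * (1 - exp (-(s / D))) := by gcongr

theorem stmt_6 (ξ kseq : ℕ → ℝ) (hξ : ∀ n, 0 ≤ ξ n) (hkpos : ∀ n, 0 ≤ kseq n)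
    (ε γ C k : ℝ) (hε : 0 < ε) (hγ : 0 < γ) (hC : 0 ≤ C)
    (hkk : ∀ n, kseq n ≤ k)
    (hrec : ∀ n, (1 / 2) * (ξ (n + 1) - ξ n) +
      (kseq n * ε) / (2 * γ ^ 2) * ξ (n + 1) ≤ C * kseq n) :
    ∀ n, ξ (n + 1) ≤
      Real.exp (-(ε * ∑ i ∈ Finset.range (n + 1), kseq i) / (γ ^ 2 + ε * k)) * ξ 0 +
      2 * C * (γ ^ 2 + ε * k) / ε *
        (1 - Real.exp (-(ε * ∑ i ∈ Finset.range (n + 1), kseq i) / (γ ^ 2 + ε * k))) := by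
  intro n
  have hP : 0 < γ ^ 2 := by positivity
  have hk : 0 ≤ k := (hkpos 0).trans (hkk 0)
  have hs (i : ℕ) : 0 ≤ kseq i * ε := mul_nonneg (hkpos i) hε.le
  have hPsD (i : ℕ) : γ ^ 2 + kseq i * ε ≤ γ ^ 2 + ε * k := by
    linarith [mul_le_mul_of_nonneg_right (hkk i) hε.le]
  have hexponent (m : ℕ) : -(ε * ∑ i ∈ range m, kseq i) / (γ ^ 2 + ε * k) =
      -∑ i ∈ range m, kseq i * ε / (γ ^ 2 + ε * k) := by
    rw [neg_div, mul_sum, sum_div]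
    simp only [mul_comm ε]
  rw [hexponent]
  refine le_exp_neg_sum_mul_add_of_succ_le hξ
    (a := fun i ↦ γ ^ 2 / (γ ^ 2 + kseq i * ε))
    (c := fun i ↦ 2 * C / ε * (γ ^ 2 / (γ ^ 2 + kseq i * ε) * (kseq i * ε)))
    (fun i ↦ div_add_le_exp_neg_div hP (hs i) (hPsD i)) (fun i ↦ ?_) (fun i ↦ ?_) (n + 1)
  · calc _ ≤ 2 * C / ε * ((γ ^ 2 + ε * k) * (1 - exp (-(kseq i * ε / (γ ^ 2 + ε * k))))) :=
          mul_le_mul_of_nonneg_left (div_add_mul_le_mul_one_sub_exp_neg hP (hs i)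
            (le_add_of_nonneg_right (mul_nonneg hε.le hk))) (by positivity)
      _ = _ := by ring
  · convert le_div_add_mul_add_of_half_sub_add_le hP (hs i) (hrec i) using 2
    field_simp
end

section
/- Let (ξⁿ) be a sequence of nonnegative reals satisfying (1 + δ·kₙ)·ξ_{n+1} ≤ ξₙ + a·kₙ + b·kₙ for all n ≥ 0, where δ > 0, a, b ≥ 0, and 0 < kₙ ≤ k. Then for all n, ξ_{n+1} ≤ exp(-Σ_{i=0}^{n} δkᵢ/(1+δk))·ξ₀ + (a+b)·(k + 1/δ)·(1 - exp(-Σ_{i=0}^{n} δkᵢ/(1+δk))). -/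
set_option maxHeartbeats 1000000 in
theorem stmt_7 (ξ kseq : ℕ → ℝ) (hξ : ∀ n, 0 ≤ ξ n)
    (δ a b k : ℝ) (hδ : 0 < δ) (ha : 0 ≤ a) (hb : 0 ≤ b)
    (hkpos : ∀ n, 0 < kseq n) (hkk : ∀ n, kseq n ≤ k)
    (hrec : ∀ n, (1 + δ * kseq n) * ξ (n + 1) ≤ ξ n + a * kseq n + b * kseq n) :
    ∀ n, ξ (n + 1) ≤
      Real.exp (-(∑ i ∈ Finset.range (n + 1), δ * kseq i / (1 + δ * k))) * ξ 0 +
      (a + b) * (k + 1 / δ) *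
        (1 - Real.exp (-(∑ i ∈ Finset.range (n + 1), δ * kseq i / (1 + δ * k)))) := by
  have hk0 : 0 < k := lt_of_lt_of_le (hkpos 0) (hkk 0)
  have hc : (0:ℝ) < 1 + δ * k := by nlinarith
  have hM0 : 0 ≤ (a + b) * (k + 1 / δ) := by
    apply mul_nonneg (by linarith)
    have : 0 < 1 / δ := by positivity
    linarith
  set M : ℝ := (a + b) * (k + 1 / δ) with hM
  have main : ∀ n, ξ n ≤
      Real.exp (-(∑ i ∈ Finset.range n, δ * kseq i / (1 + δ * k))) * ξ 0 +
      M * (1 - Real.exp (-(∑ i ∈ Finset.range n, δ * kseq i / (1 + δ * k)))) := by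
    intro n
    induction n with
    | zero => simp
    | succ n ih =>
      have hsum : ∑ i ∈ Finset.range (n + 1), δ * kseq i / (1 + δ * k)
          = (∑ i ∈ Finset.range n, δ * kseq i / (1 + δ * k)) + δ * kseq n / (1 + δ * k) :=
        Finset.sum_range_succ _ n
      set S : ℝ := ∑ i ∈ Finset.range n, δ * kseq i / (1 + δ * k) with hS
      have hS0 : 0 ≤ S := by
        apply Finset.sum_nonneg
        intro i _
        exact div_nonneg (mul_nonneg hδ.le (hkpos i).le) hc.le
      set x : ℝ := δ * kseq n with hx
      have hx0 : 0 < x := mul_pos hδ (hkpos n)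
      have hxk : x ≤ δ * k := mul_le_mul_of_nonneg_left (hkk n) hδ.le
      set E : ℝ := Real.exp (-S) with hE
      have hE0 : 0 < E := Real.exp_pos _
      have hE1 : E ≤ 1 := Real.exp_le_one_iff.mpr (by linarith)
      set e : ℝ := Real.exp (-(x / (1 + δ * k))) with he
      have he0 : 0 < e := Real.exp_pos _
      -- (i) : 1 ≤ (1+x) * e
      have h1x : 0 < 1 + x := by linarith
      have hi : 1 ≤ (1 + x) * e := by
        have h1 : x / (1 + δ * k) ≤ x / (1 + x) :=
          div_le_div_of_nonneg_left hx0.le h1x (by linarith)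
        have h2 : 1 - x / (1 + x) ≤ Real.exp (-(x / (1 + x))) := by
          have := Real.add_one_le_exp (-(x / (1 + x)))
          linarith
        have h3 : Real.exp (-(x / (1 + x))) ≤ e :=
          Real.exp_le_exp.mpr (by linarith)
        have h4 : (1 + x) * (1 - x / (1 + x)) = 1 := by field_simp; ring
        nlinarith
      -- (ii) : (a+b) * kseq n ≤ (1+x) * M * (1 - e)
      have hii : (a + b) * kseq n ≤ (1 + x) * (M * (1 - e)) := by
        have ht0 : 0 < x / (1 + δ * k) := div_pos hx0 hc
        have h5 : e ≤ 1 / (1 + x / (1 + δ * k)) := by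
          rw [he, Real.exp_neg]
          have h6 : 1 + x / (1 + δ * k) ≤ Real.exp (x / (1 + δ * k)) := by
            have := Real.add_one_le_exp (x / (1 + δ * k))
            linarith
          rw [one_div]
          exact inv_anti₀ (by linarith) h6
        -- so 1 - e ≥ (x/c)/(1 + x/c), and M * (x/c) = (a+b) * kseq n
        have h7 : M * (x / (1 + δ * k)) = (a + b) * kseq n := by
          rw [hM, hx]
          field_simp
          ring
        have h8 : 1 - 1 / (1 + x / (1 + δ * k)) = (x / (1 + δ * k)) / (1 + x / (1 + δ * k)) := by
          field_simp; ring
        have h9 : x / (1 + δ * k) ≤ x := by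
          rw [div_le_iff₀ hc]
          nlinarith
        -- M*(1-e) ≥ M * (x/c)/(1+x/c) = (a+b)kseq n / (1+x/c) ≥ (a+b)kseq n/(1+x)
        have h10 : M * ((x / (1 + δ * k)) / (1 + x / (1 + δ * k))) ≤ M * (1 - e) := by
          apply mul_le_mul_of_nonneg_left _ hM0
          linarith [h5, h8]
        have hA : 0 ≤ (a + b) * kseq n := mul_nonneg (by linarith) (hkpos n).le
        have hden : 0 < 1 + x / (1 + δ * k) := by linarith
        have h11 : (a + b) * kseq n ≤ (1 + x) * (M * ((x / (1 + δ * k)) / (1 + x / (1 + δ * k)))) := by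
          have heq : (1 + x) * (M * ((x / (1 + δ * k)) / (1 + x / (1 + δ * k))))
              = ((1 + x) * (M * (x / (1 + δ * k)))) / (1 + x / (1 + δ * k)) := by ring
          rw [heq, le_div_iff₀ hden, h7]
          nlinarith [mul_le_mul_of_nonneg_left h9 hA]
        calc (a + b) * kseq n ≤ (1 + x) * (M * ((x / (1 + δ * k)) / (1 + x / (1 + δ * k)))) := h11
          _ ≤ (1 + x) * (M * (1 - e)) := by
              apply mul_le_mul_of_nonneg_left h10 (by linarith)
      -- combine
      rw [hsum, neg_add, Real.exp_add, ← hE, ← he]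
      have hrecn := hrec n
      rw [← hx] at hrecn
      clear_value S x E e M
      clear hsum hS hE he hx
      have hgoal : E * ξ 0 + M * (1 - E) + (a + b) * kseq n
          ≤ (1 + x) * (E * e * ξ 0 + M * (1 - E * e)) := by
        have hEξ : 0 ≤ E * ξ 0 := mul_nonneg hE0.le (hξ 0)
        have hME : 0 ≤ M * (1 - E) := mul_nonneg hM0 (by linarith)
        nlinarith [mul_le_mul_of_nonneg_right hi hEξ, mul_le_mul_of_nonneg_right hi hME,
          mul_nonneg (mul_nonneg hM0 he0.le) (sub_nonneg.mpr hE1)]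
      have hle : (1 + x) * ξ (n + 1) ≤ (1 + x) * (E * e * ξ 0 + M * (1 - E * e)) := by
        calc (1 + x) * ξ (n + 1) ≤ ξ n + a * kseq n + b * kseq n := hrecn
          _ ≤ E * ξ 0 + M * (1 - E) + (a + b) * kseq n := by linarith [ih]
          _ ≤ _ := hgoal
      exact le_of_mul_le_mul_left hle h1x
  intro n
  exact main (n + 1)
end

section
/- Let (ξⁿ) be nonnegative reals with (1 + δkₙ)ξ_{n+1} ≤ ξₙ + a·kₙ for all n ≥ 0, where δ > 0, a ≥ 0, kₙ ∈ (0, k]. Then ξ_{n+1} ≤ exp(-δ·t^{n+1}/(1 + δk))·ξ₀ + a·(1 + δk)/δ for all n, where t^{n+1} = Σ_{i=0}^{n} kᵢ. In particular limsup_{n→∞} ξⁿ ≤ a(1+δk)/δ whenever t^n → ∞. -/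
/-!
Shifting by the equilibrium `a / δ` removes the forcing term: `ηₙ = ξₙ - a / δ` satisfies
`(1 + δ kₙ) η_{n+1} ≤ ηₙ`. Since `(1 + x)⁻¹ ≤ exp (-x / (1 + x)) ≤ exp (-x / (1 + δ k))` for
`0 ≤ x ≤ δ k`, the positive part of `ηₙ` decays like `exp (-δ tⁿ / (1 + δ k))`, so `ξₙ` is bounded by
the decaying initial contribution plus `a / δ ≤ a (1 + δ k) / δ`.
-/
open Filter Topology Finset

lemma inv_one_add_le_exp_neg_div {x c : ℝ} (hx : 0 ≤ x) (hxc : x ≤ c) :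
    (1 + x)⁻¹ ≤ Real.exp (-x / (1 + c)) := by
  have hx1 : 0 < 1 + x := by linarith
  calc (1 + x)⁻¹ = Real.exp (-Real.log (1 + x)) := by
        rw [Real.exp_neg, Real.exp_log hx1]
    _ ≤ Real.exp (-x / (1 + c)) := by
        gcongr
        rw [neg_div, neg_le_neg_iff]
        calc x / (1 + c) ≤ x / (1 + x) := by gcongr
          _ = 1 - (1 + x)⁻¹ := by field_simp; ring
          _ ≤ Real.log (1 + x) := Real.one_sub_inv_le_log_of_pos hx1

lemma le_exp_neg_sum_mul_of_one_add_mul_le {u x : ℕ → ℝ} {c B : ℝ} (hx : ∀ n, 0 ≤ x n)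
    (hxc : ∀ n, x n ≤ c) (hu : ∀ n, (1 + x n) * u (n + 1) ≤ u n) (hB : 0 ≤ B) (hu0 : u 0 ≤ B)
    (n : ℕ) : u n ≤ Real.exp (-(∑ i ∈ range n, x i) / (1 + c)) * B := by
  induction n with
  | zero => simpa using hu0
  | succ n ih =>
    have hx1 : 0 < 1 + x n := by linarith [hx n]
    calc u (n + 1) ≤ (1 + x n)⁻¹ * u n := by
          rw [inv_mul_eq_div, le_div_iff₀ hx1, mul_comm]; exact hu n
      _ ≤ (1 + x n)⁻¹ * (Real.exp (-(∑ i ∈ range n, x i) / (1 + c)) * B) := by gcongr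
      _ ≤ Real.exp (-x n / (1 + c)) * (Real.exp (-(∑ i ∈ range n, x i) / (1 + c)) * B) := by
          gcongr
          exact inv_one_add_le_exp_neg_div (hx n) (hxc n)
      _ = Real.exp (-(∑ i ∈ range (n + 1), x i) / (1 + c)) * B := by
          rw [← mul_assoc, ← Real.exp_add, sum_range_succ]; ring_nf

lemma limsup_le_of_le_of_tendsto {ι : Type*} {l : Filter ι} [l.NeBot] {u v : ι → ℝ} {L : ℝ}
    (hu : IsBoundedUnder (· ≥ ·) l u) (huv : ∀ i, u i ≤ v i) (hv : Tendsto v l (𝓝 L)) :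
    limsup u l ≤ L :=
  hv.limsup_eq ▸ limsup_le_limsup (Eventually.of_forall huv) hu.isCoboundedUnder_le
    hv.isBoundedUnder_le

lemma tendsto_exp_neg_mul_div_mul_nhds_zero {ι : Type*} {l : Filter ι} {t : ι → ℝ}
    (ht : Tendsto t l atTop) {δ c : ℝ} (hδ : 0 < δ) (hc : 0 < c) (B : ℝ) :
    Tendsto (fun i => Real.exp (-(δ * t i) / c) * B) l (𝓝 0) := by
  have h : Tendsto (fun i => -(δ * t i) / c) l atBot :=
    (tendsto_neg_atTop_atBot.comp (ht.const_mul_atTop hδ)).atBot_div_const hc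
  simpa using (Real.tendsto_exp_atBot.comp h).mul_const B

open Filter in
theorem stmt_15 (ξ kseq : ℕ → ℝ) (hξ : ∀ n, 0 ≤ ξ n)
    (δ a k : ℝ) (hδ : 0 < δ) (ha : 0 ≤ a)
    (hkpos : ∀ n, 0 < kseq n) (hkk : ∀ n, kseq n ≤ k)
    (hrec : ∀ n, (1 + δ * kseq n) * ξ (n + 1) ≤ ξ n + a * kseq n) :
    (∀ n, ξ (n + 1) ≤
      Real.exp (-(δ * ∑ i ∈ Finset.range (n + 1), kseq i) / (1 + δ * k)) * ξ 0 +
        a * (1 + δ * k) / δ) ∧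
    (Tendsto (fun n => ∑ i ∈ Finset.range n, kseq i) atTop atTop →
      limsup ξ atTop ≤ a * (1 + δ * k) / δ) := by
  have hδk : 0 ≤ δ * k := mul_nonneg hδ.le ((hkpos 0).le.trans (hkk 0))
  have hshift : ∀ n, (1 + δ * kseq n) * (ξ (n + 1) - a / δ) ≤ ξ n - a / δ := fun n => by
    have hexpand : (1 + δ * kseq n) * (ξ (n + 1) - a / δ)
        = (1 + δ * kseq n) * ξ (n + 1) - a * kseq n - a / δ := by
      field_simp; ring
    linarith [hrec n]
  have hbound : ∀ n, ξ n ≤ Real.exp (-(δ * ∑ i ∈ range n, kseq i) / (1 + δ * k)) * ξ 0 + a / δ :=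
    fun n => by
      have hdecay := le_exp_neg_sum_mul_of_one_add_mul_le (u := fun n => ξ n - a / δ)
        (fun n => (mul_pos hδ (hkpos n)).le) (fun n => mul_le_mul_of_nonneg_left (hkk n) hδ.le)
        hshift (hξ 0) (by linarith [div_nonneg ha hδ.le]) n
      rw [← mul_sum] at hdecay
      linarith
  have habsorb : a / δ ≤ a * (1 + δ * k) / δ := by
    gcongr
    exact le_mul_of_one_le_right ha (by linarith)
  refine ⟨fun n => (hbound (n + 1)).trans (by linarith), fun ht => ?_⟩
  have hlim := (tendsto_exp_neg_mul_div_mul_nhds_zero ht hδ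
    (by linarith : 0 < 1 + δ * k) (ξ 0)).add_const (a / δ)
  rw [zero_add] at hlim
  exact (limsup_le_of_le_of_tendsto ⟨0, eventually_map.mpr (.of_forall hξ)⟩ hbound hlim).trans
    habsorb
end
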